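/- arXiv:0901.0528 — 2 statements merged into one kernel-verified Lean document; each statement's English description precedes it below -/
import Mathlib

section
/- Let M be a compact, connected, closed (boundaryless) smooth manifold of dimension n ≥ 1. Then there exist an open subset C of M homeomorphic to ℝⁿ with complement K = M \ C, and a point c ∈ C, such that K is a deformation retract of M \ {c}: there is a continuous map F : (M \ {c}) × [0,1] → M \ {c} with F(x,0) = x for all x, F(x,1) ∈ K for all x, and F(z,t) = z for all z ∈ K and all t ∈ [0,1]. In particular M \ {c} and K are homotopy equivalent. -/
/-!
Take a closed coordinate ball `B` of radius `ε` around `c` inside a chart, and let `C` be its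
interior. Pushing each point of `B \ {c}` radially away from `c` until it reaches the boundary
sphere, while fixing every point outside `B`, deforms `M \ {c}` onto `M \ C`. The two pieces glue
continuously because the radial push fixes the sphere, and `B` is closed in `M` because it is
compact and `M` is Hausdorff.
-/

open scoped Manifold unitInterval
open Metric Set

section Radial

variable {E : Type*} [NormedAddCommGroup E] [NormedSpace ℝ E]

noncomputable def radialHomotopy (c : E) (ε : ℝ) (q : E × I) : E :=
  c + ((1 - q.2 : ℝ) + q.2 * (ε / ‖q.1 - c‖)) • (q.1 - c)

variable {c x : E} {ε : ℝ}

@[simp]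
lemma radialHomotopy_zero (c : E) (ε : ℝ) (x : E) : radialHomotopy c ε (x, 0) = x := by
  simp [radialHomotopy]

lemma radialHomotopy_of_norm_sub_eq (hx : ‖x - c‖ = ε) (t : I) :
    radialHomotopy c ε (x, t) = x := by
  rcases eq_or_ne x c with rfl | hxc
  · simp [radialHomotopy]
  · have hε : ε ≠ 0 := hx ▸ norm_ne_zero_iff.2 (sub_ne_zero.2 hxc)
    simp [radialHomotopy, hx, hε]

lemma norm_radialHomotopy_sub (hxc : x ≠ c) (hε : 0 ≤ ε) (t : I) :
    ‖radialHomotopy c ε (x, t) - c‖ = (1 - t) * ‖x - c‖ + t * ε := by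
  have hr : 0 < ‖x - c‖ := norm_pos_iff.2 (sub_ne_zero.2 hxc)
  have ha : 0 ≤ (1 - t : ℝ) + t * (ε / ‖x - c‖) :=
    add_nonneg (sub_nonneg.2 t.2.2) (mul_nonneg t.2.1 (div_nonneg hε hr.le))
  rw [radialHomotopy, add_sub_cancel_left, norm_smul, Real.norm_of_nonneg ha]
  field_simp

lemma continuousOn_radialHomotopy (c : E) (ε : ℝ) :
    ContinuousOn (radialHomotopy c ε) {q | q.1 ≠ c} := by
  unfold radialHomotopy
  fun_prop (disch := intro q hq; exact norm_ne_zero_iff.2 (sub_ne_zero.2 hq))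

lemma radialHomotopy_mem_closedBall (hx : x ∈ closedBall c ε) (hxc : x ≠ c) (t : I) :
    radialHomotopy c ε (x, t) ∈ closedBall c ε := by
  have hε : 0 ≤ ε := nonempty_closedBall.1 ⟨x, hx⟩
  rw [mem_closedBall, dist_eq_norm] at hx ⊢
  rw [norm_radialHomotopy_sub hxc hε]
  nlinarith [t.2.1, t.2.2]

lemma radialHomotopy_ne_center (hxc : x ≠ c) (hε : 0 < ε) (t : I) :
    radialHomotopy c ε (x, t) ≠ c := by
  have hr : 0 < ‖x - c‖ := norm_pos_iff.2 (sub_ne_zero.2 hxc)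
  have h1t : 0 ≤ (1 - t : ℝ) * ‖x - c‖ := mul_nonneg (sub_nonneg.2 t.2.2) hr.le
  intro h
  have hnorm := norm_radialHomotopy_sub hxc hε.le t
  rw [h, sub_self, norm_zero] at hnorm
  rcases t.2.1.eq_or_lt with ht | ht
  · simp only [← ht, sub_zero, one_mul, zero_mul, add_zero] at hnorm
    exact hr.ne hnorm
  · linarith [mul_pos ht hε]

end Radial

lemma Metric.nonempty_homeomorph_ball {E : Type*} [NormedAddCommGroup E] [NormedSpace ℝ E]
    (c : E) {r : ℝ} (hr : 0 < r) : Nonempty (ball c r ≃ₜ E) :=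
  let e := OpenPartialHomeomorph.univBall c r
  ⟨(Homeomorph.setCongr (OpenPartialHomeomorph.univBall_target c hr)).symm.trans <|
    e.toHomeomorphSourceTarget.symm.trans <|
      (Homeomorph.setCongr (OpenPartialHomeomorph.univBall_source c r)).trans
        (Homeomorph.Set.univ E)⟩

lemma OpenPartialHomeomorph.nonempty_homeomorph_source_inter_preimage {X Y : Type*}
    [TopologicalSpace X] [TopologicalSpace Y] (φ : OpenPartialHomeomorph X Y) {s : Set Y}
    (hs : s ⊆ φ.target) : Nonempty ((φ.source ∩ φ ⁻¹' s : Set X) ≃ₜ s) :=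
  ⟨(φ.symm.homeomorphOfImageSubsetSource hs (φ.symm_image_eq_source_inter_preimage hs)).symm⟩

def IsStrongDeformationRetract {X : Type*} [TopologicalSpace X] (K : Set X) : Prop :=
  ∃ F : X × I → X, Continuous F ∧ (∀ x, F (x, 0) = x) ∧ (∀ x, F (x, 1) ∈ K) ∧
    ∀ z ∈ K, ∀ t, F (z, t) = z

namespace OpenPartialHomeomorph

variable {E M : Type*} [NormedAddCommGroup E] [NormedSpace ℝ E] [TopologicalSpace M]
  (φ : OpenPartialHomeomorph M E) {p x : M} {ε : ℝ}

open Classical in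
noncomputable def ballRetraction (p : M) (ε : ℝ) (q : M × I) : M :=
  if q.1 ∈ φ.source ∩ φ ⁻¹' closedBall (φ p) ε then φ.symm (radialHomotopy (φ p) ε (φ q.1, q.2))
  else q.1

lemma ballRetraction_zero (x : M) : φ.ballRetraction p ε (x, 0) = x := by
  by_cases hx : x ∈ φ.source ∩ φ ⁻¹' closedBall (φ p) ε
  · simp [ballRetraction, hx, φ.left_inv hx.1]
  · simp [ballRetraction, hx]

lemma ballRetraction_of_notMem (hx : x ∉ φ.source ∩ φ ⁻¹' ball (φ p) ε) (t : I) :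
    φ.ballRetraction p ε (x, t) = x := by
  by_cases hxD : x ∈ φ.source ∩ φ ⁻¹' closedBall (φ p) ε
  · have hsphere : ‖φ x - φ p‖ = ε := by
      have hxb : φ x ∉ ball (φ p) ε := fun h => hx ⟨hxD.1, h⟩
      rw [mem_ball, dist_eq_norm, not_lt] at hxb
      exact le_antisymm (mem_closedBall_iff_norm.1 hxD.2) hxb
    simp [ballRetraction, hxD, radialHomotopy_of_norm_sub_eq hsphere, φ.left_inv hxD.1]
  · simp [ballRetraction, hxD]

variable {φ}

lemma ballRetraction_ne (hp : p ∈ φ.source) (hε : 0 < ε) (hsub : closedBall (φ p) ε ⊆ φ.target)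
    (hxp : x ≠ p) (t : I) : φ.ballRetraction p ε (x, t) ≠ p := by
  by_cases hxD : x ∈ φ.source ∩ φ ⁻¹' closedBall (φ p) ε
  · have hφx : φ x ≠ φ p := fun h => hxp (φ.injOn hxD.1 hp h)
    have hmem := radialHomotopy_mem_closedBall hxD.2 hφx t
    simp only [ballRetraction, hxD, if_true]
    intro h
    refine radialHomotopy_ne_center hφx hε t ?_
    rw [← φ.right_inv (hsub hmem), h]
  · simpa [ballRetraction, hxD] using hxp

lemma ballRetraction_one_notMem (hp : p ∈ φ.source) (hε : 0 < ε)
    (hsub : closedBall (φ p) ε ⊆ φ.target) (hxp : x ≠ p) :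
    φ.ballRetraction p ε (x, 1) ∉ φ.source ∩ φ ⁻¹' ball (φ p) ε := by
  by_cases hxD : x ∈ φ.source ∩ φ ⁻¹' closedBall (φ p) ε
  · have hφx : φ x ≠ φ p := fun h => hxp (φ.injOn hxD.1 hp h)
    have hmem := radialHomotopy_mem_closedBall hxD.2 hφx 1
    simp [ballRetraction, hxD, φ.right_inv (hsub hmem), dist_eq_norm,
      norm_radialHomotopy_sub hφx hε.le]
  · simp only [ballRetraction, hxD, if_false]
    exact fun hx => hxD ⟨hx.1, ball_subset_closedBall hx.2⟩

lemma continuousOn_ballRetraction [ProperSpace E] [T2Space M] (hp : p ∈ φ.source)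
    (hsub : closedBall (φ p) ε ⊆ φ.target) :
    ContinuousOn (φ.ballRetraction p ε) ({p}ᶜ ×ˢ univ) := by
  classical
  have hD : IsClosed (φ.source ∩ φ ⁻¹' closedBall (φ p) ε) := by
    rw [← φ.symm_image_eq_source_inter_preimage hsub]
    exact ((isCompact_closedBall _ ε).image_of_continuousOn
      (φ.symm.continuousOn.mono hsub)).isClosed
  have hCD : φ.source ∩ φ ⁻¹' ball (φ p) ε ⊆ interior (φ.source ∩ φ ⁻¹' closedBall (φ p) ε) :=
    (φ.isOpen_inter_preimage isOpen_ball).subset_interior_iff.2 <|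
      inter_subset_inter_right _ (preimage_mono ball_subset_closedBall)
  apply ContinuousOn.if
  · rintro q ⟨-, hq⟩
    replace hq := continuous_fst.frontier_preimage_subset _ hq
    have hqD := hD.frontier_subset hq
    have hfix := φ.ballRetraction_of_notMem (fun hC => hq.2 (hCD hC)) q.2
    rwa [ballRetraction, if_pos hqD] at hfix
  · have hDq : IsClosed {q : M × I | q.1 ∈ φ.source ∩ φ ⁻¹' closedBall (φ p) ε} :=
      hD.preimage continuous_fst
    rw [hDq.closure_eq]
    refine φ.symm.continuousOn.comp ((continuousOn_radialHomotopy _ ε).comp ?_ ?_) ?_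
    · exact (φ.continuousOn.comp continuous_fst.continuousOn fun q hq => hq.2.1).prodMk
        continuous_snd.continuousOn
    · rintro ⟨x, t⟩ ⟨hxp, hxD⟩
      exact fun h => hxp.1 (φ.injOn hxD.1 hp h)
    · rintro ⟨x, t⟩ ⟨hxp, hxD⟩
      exact hsub (radialHomotopy_mem_closedBall hxD.2 (fun h => hxp.1 (φ.injOn hxD.1 hp h)) t)
  · exact continuous_fst.continuousOn

theorem isStrongDeformationRetract_compl_source_inter_preimage_ball [ProperSpace E] [T2Space M]
    (hp : p ∈ φ.source) (hε : 0 < ε) (hsub : closedBall (φ p) ε ⊆ φ.target) :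
    IsStrongDeformationRetract
      {z : ({p}ᶜ : Set M) | (z : M) ∉ φ.source ∩ φ ⁻¹' ball (φ p) ε} :=
  ⟨fun q => ⟨φ.ballRetraction p ε (q.1, q.2), ballRetraction_ne hp hε hsub q.1.2 q.2⟩,
    ((continuousOn_ballRetraction hp hsub).comp_continuous
      ((continuous_subtype_val.comp continuous_fst).prodMk continuous_snd)
      fun q => ⟨q.1.2, mem_univ _⟩).subtype_mk _,
    fun x => Subtype.ext (φ.ballRetraction_zero x),
    fun x => ballRetraction_one_notMem hp hε hsub x.2,
    fun _ hz t => Subtype.ext (φ.ballRetraction_of_notMem hz t)⟩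

end OpenPartialHomeomorph

theorem punctured_manifold_deformation_retracts_onto_complement_of_cell_general
    {n : ℕ} (M : Type*) [TopologicalSpace M] [T2Space M]
    [ChartedSpace (EuclideanSpace ℝ (Fin n)) M]
    [ConnectedSpace M] :
    ∃ C : Set M, IsOpen C ∧ Nonempty (C ≃ₜ EuclideanSpace ℝ (Fin n)) ∧
      ∃ c ∈ C, ∃ F : ({c}ᶜ : Set M) × I → ({c}ᶜ : Set M),
        Continuous F ∧
        (∀ x, F (x, 0) = x) ∧
        (∀ x, (F (x, 1) : M) ∈ Cᶜ) ∧
        (∀ z : ({c}ᶜ : Set M), (z : M) ∈ Cᶜ → ∀ t, F (z, t) = z) := by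
  obtain ⟨p⟩ : Nonempty M := inferInstance
  set φ := chartAt (EuclideanSpace ℝ (Fin n)) p
  have hp : p ∈ φ.source := mem_chart_source _ p
  obtain ⟨ε, hε, hsub⟩ :=
    nhds_basis_closedBall.mem_iff.1 (φ.open_target.mem_nhds (φ.map_source hp))
  obtain ⟨eC⟩ := φ.nonempty_homeomorph_source_inter_preimage (ball_subset_closedBall.trans hsub)
  obtain ⟨eB⟩ := nonempty_homeomorph_ball (φ p) hε
  exact ⟨_, φ.isOpen_inter_preimage isOpen_ball, ⟨eC.trans eB⟩, p, ⟨hp, mem_ball_self hε⟩,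
    φ.isStrongDeformationRetract_compl_source_inter_preimage_ball hp hε hsub⟩

/-- **Theorem 2.** For a compact, connected, closed smooth `n`-manifold `M` (`n ≥ 1`) there are
an open cell `C ≃ₜ ℝⁿ` with complement `K = M \ C` and a point `c ∈ C` such that `K` is a
deformation retract of `M \ {c}`: there is a continuous `F : (M \ {c}) × [0,1] → M \ {c}` with
`F (x, 0) = x`, `F (x, 1) ∈ K`, and `F (z, t) = z` for `z ∈ K`.  In particular `M \ {c}` and `K`
are homotopy equivalent. -/
theorem punctured_manifold_deformation_retracts_onto_complement_of_cell
    {n : ℕ} (hn : 1 ≤ n) (M : Type*) [TopologicalSpace M] [T2Space M]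
    [ChartedSpace (EuclideanSpace ℝ (Fin n)) M]
    [IsManifold (𝓡 n) (⊤ : ℕ∞) M] [CompactSpace M] [ConnectedSpace M] :
    ∃ C : Set M, IsOpen C ∧ Nonempty (C ≃ₜ EuclideanSpace ℝ (Fin n)) ∧
      ∃ c ∈ C, ∃ F : ({c}ᶜ : Set M) × I → ({c}ᶜ : Set M),
        Continuous F ∧
        (∀ x, F (x, 0) = x) ∧
        (∀ x, (F (x, 1) : M) ∈ Cᶜ) ∧
        (∀ z : ({c}ᶜ : Set M), (z : M) ∈ Cᶜ → ∀ t, F (z, t) = z) :=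
  punctured_manifold_deformation_retracts_onto_complement_of_cell_general M
end

section
/- Let M be a compact, connected, closed (boundaryless) smooth manifold of dimension n ≥ 1. Then there exist an open subset C of M homeomorphic to ℝⁿ with complement K = M \ C and a point c ∈ C such that for every basepoint z ∈ K, the fundamental group of M \ {c} at z is isomorphic to the fundamental group of K at z. -/
/-!
Take for `C` a small ball around `c` in a chart. Pushing every point of the punctured closed
ball radially out to the boundary sphere, while fixing everything outside the ball, is a homotopy
on `M \ {c}` from the identity to a retraction onto `M \ C`. Hence the inclusion
`M \ C ↪ M \ {c}` is a homotopy equivalence, and it induces isomorphisms of fundamental groups.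
-/

open Metric Set
open scoped ContinuousMap

section Radial

variable {E : Type*} [NormedAddCommGroup E] [NormedSpace ℝ E]

/-- At time `t` the distance `s = ‖p - x‖` becomes `max s ((1 - t) * s + t * r)`: inside the
ball it moves linearly to `r`, outside it is unchanged. -/
noncomputable def radialPush (x : E) (r t : ℝ) (p : E) : E :=
  x + (max ‖p - x‖ ((1 - t) * ‖p - x‖ + t * r) / ‖p - x‖) • (p - x)

variable {x p : E} {r t : ℝ}

theorem norm_radialPush_sub (hp : p ≠ x) :
    ‖radialPush x r t p - x‖ = max ‖p - x‖ ((1 - t) * ‖p - x‖ + t * r) := by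
  have hpos : 0 < ‖p - x‖ := norm_pos_iff.mpr (sub_ne_zero.mpr hp)
  rw [radialPush, add_sub_cancel_left, norm_smul, Real.norm_eq_abs,
    abs_of_nonneg (div_nonneg (le_max_of_le_left hpos.le) hpos.le), div_mul_cancel₀ _ hpos.ne']

theorem radialPush_zero (x : E) (r : ℝ) (p : E) : radialPush x r 0 p = p := by
  rcases eq_or_ne p x with rfl | hp
  · simp [radialPush]
  · have hpos : ‖p - x‖ ≠ 0 := norm_ne_zero_iff.mpr (sub_ne_zero.mpr hp)
    simp [radialPush, hpos]

theorem radialPush_of_le (ht : 0 ≤ t) (hp : r ≤ ‖p - x‖) : radialPush x r t p = p := by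
  rcases eq_or_ne p x with rfl | hpx
  · simp [radialPush]
  · have hpos : ‖p - x‖ ≠ 0 := norm_ne_zero_iff.mpr (sub_ne_zero.mpr hpx)
    have : (1 - t) * ‖p - x‖ + t * r ≤ ‖p - x‖ := by nlinarith
    simp [radialPush, max_eq_left this, hpos]

theorem radialPush_ne (hp : p ≠ x) : radialPush x r t p ≠ x := by
  rw [← sub_ne_zero, ← norm_pos_iff, norm_radialPush_sub hp]
  exact lt_max_of_lt_left (norm_pos_iff.mpr (sub_ne_zero.mpr hp))

theorem radialPush_one_notMem_ball (hp : p ≠ x) : radialPush x r 1 p ∉ ball x r := by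
  rw [mem_ball, dist_eq_norm, norm_radialPush_sub hp, not_lt]
  simp

theorem radialPush_mem_closedBall (ht : t ≤ 1) (hp : p ∈ closedBall x r) :
    radialPush x r t p ∈ closedBall x r := by
  rcases eq_or_ne p x with rfl | hpx
  · simpa [radialPush] using hp
  rw [mem_closedBall, dist_eq_norm] at hp ⊢
  rw [norm_radialPush_sub hpx]
  exact max_le hp (by nlinarith)

theorem continuousOn_radialPush (x : E) (r : ℝ) :
    ContinuousOn (fun q : ℝ × E => radialPush x r q.1 q.2) {q | q.2 ≠ x} := by
  unfold radialPush
  refine continuousOn_const.add (ContinuousOn.smul ?_ (by fun_prop))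
  refine ContinuousOn.div (by fun_prop) (by fun_prop) fun q hq => ?_
  exact norm_ne_zero_iff.mpr (sub_ne_zero.mpr hq)

end Radial

def ContinuousMap.HomotopyEquiv.ofDeformationRetraction {M : Type*} [TopologicalSpace M]
    {A X : Set M} (hAX : A ⊆ X) {f : C(X, X)} (H : (ContinuousMap.id X).Homotopy f)
    (hf : ∀ x, (f x : M) ∈ A) (hfA : ∀ x : X, (x : M) ∈ A → f x = x) : A ≃ₕ X where
  toFun := ⟨inclusion hAX, continuous_inclusion hAX⟩
  invFun := ⟨fun x => ⟨f x, hf x⟩, (continuous_subtype_val.comp f.continuous).subtype_mk _⟩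
  left_inv := by
    convert ContinuousMap.Homotopic.refl (ContinuousMap.id A)
    ext a
    have hfa : (f (inclusion hAX a) : M) = a := congrArg Subtype.val (hfA _ a.2)
    exact hfa
  right_inv := ⟨H.symm⟩

noncomputable def ContinuousMap.HomotopyEquiv.fundamentalGroupMulEquiv {X Y : Type*}
    [TopologicalSpace X] [TopologicalSpace Y] (e : X ≃ₕ Y) (x : X) :
    FundamentalGroup X x ≃* FundamentalGroup Y (e x) :=
  (FundamentalGroupoidFunctor.equivOfHomotopyEquiv e).fullyFaithfulFunctor.mulEquivEnd
    (FundamentalGroupoid.mk x)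

namespace OpenPartialHomeomorph

section ChartBall

variable {M E : Type*} [TopologicalSpace M] [PseudoMetricSpace E]
  (φ : OpenPartialHomeomorph M E) {c : M} {r : ℝ}

def chartBall (c : M) (r : ℝ) : Set M := φ.source ∩ φ ⁻¹' ball (φ c) r

theorem isOpen_chartBall (c : M) (r : ℝ) : IsOpen (φ.chartBall c r) :=
  φ.isOpen_inter_preimage isOpen_ball

theorem mem_chartBall_self (hc : c ∈ φ.source) (hr : 0 < r) : c ∈ φ.chartBall c r :=
  ⟨hc, mem_ball_self hr⟩

end ChartBall

variable {M E : Type*} [TopologicalSpace M] [NormedAddCommGroup E] [NormedSpace ℝ E]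
  (φ : OpenPartialHomeomorph M E) {c : M} {r : ℝ}

theorem nonempty_homeomorph_chartBall (hr : 0 < r) (hball : ball (φ c) r ⊆ φ.target) :
    Nonempty (φ.chartBall c r ≃ₜ E) := by
  have himage : φ.symm '' ball (φ c) r = φ.chartBall c r :=
    φ.symm_image_eq_source_inter_preimage hball
  exact ⟨(φ.symm.homeomorphOfImageSubsetSource hball himage).symm.trans <|
    (Homeomorph.setCongr (univBall_target (φ c) hr).symm).trans <|
      (univBall (φ c) r).toHomeomorphSourceTarget.symm.trans <|
        (Homeomorph.setCongr (univBall_source (φ c) r)).trans (Homeomorph.Set.univ E)⟩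

open Classical in
noncomputable def chartPush (c : M) (r t : ℝ) (m : M) : M :=
  if m ∈ φ.source then φ.symm (radialPush (φ c) r t (φ m)) else m

variable {φ}

theorem radialPush_mem_target (hrt : closedBall (φ c) r ⊆ φ.target) {t : ℝ} (ht : t ∈ Icc 0 1)
    {m : M} (hm : m ∈ φ.source) : radialPush (φ c) r t (φ m) ∈ φ.target := by
  by_cases hmr : φ m ∈ closedBall (φ c) r
  · exact hrt (radialPush_mem_closedBall ht.2 hmr)
  · rw [mem_closedBall, dist_eq_norm, not_le] at hmr
    rw [radialPush_of_le ht.1 hmr.le]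
    exact φ.map_source hm

theorem chartPush_zero (m : M) : φ.chartPush c r 0 m = m := by
  by_cases hm : m ∈ φ.source <;> simp [chartPush, radialPush_zero, hm]

theorem chartPush_of_notMem_chartBall {t : ℝ} (ht : 0 ≤ t) {m : M} (hm : m ∉ φ.chartBall c r) :
    φ.chartPush c r t m = m := by
  by_cases hms : m ∈ φ.source
  · have hmr : r ≤ ‖φ m - φ c‖ := by
      simpa [chartBall, hms, dist_eq_norm] using hm
    simp [chartPush, hms, radialPush_of_le ht hmr]
  · simp [chartPush, hms]

theorem chartPush_ne (hc : c ∈ φ.source) (hrt : closedBall (φ c) r ⊆ φ.target) {t : ℝ}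
    (ht : t ∈ Icc 0 1) {m : M} (hm : m ≠ c) : φ.chartPush c r t m ≠ c := by
  by_cases hms : m ∈ φ.source
  · rw [chartPush, if_pos hms]
    intro h
    have hφ : φ m ≠ φ c := fun h' => hm (φ.injOn hms hc h')
    have hpush := congrArg φ h
    rw [φ.right_inv (radialPush_mem_target hrt ht hms)] at hpush
    exact radialPush_ne hφ hpush
  · rwa [chartPush, if_neg hms]

theorem chartPush_one_notMem_chartBall (hc : c ∈ φ.source) (hrt : closedBall (φ c) r ⊆ φ.target)
    {m : M} (hm : m ≠ c) : φ.chartPush c r 1 m ∉ φ.chartBall c r := by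
  by_cases hms : m ∈ φ.source
  · have hφ : φ m ≠ φ c := fun h' => hm (φ.injOn hms hc h')
    rw [chartPush, if_pos hms]
    intro h
    apply radialPush_one_notMem_ball hφ
    simpa [φ.right_inv (radialPush_mem_target hrt ⟨zero_le_one, le_rfl⟩ hms)] using h.2
  · rw [chartPush, if_neg hms]
    exact fun h => hms h.1

theorem continuousOn_chartPush [T2Space M] [ProperSpace E] (hc : c ∈ φ.source)
    (hrt : closedBall (φ c) r ⊆ φ.target) :
    ContinuousOn (fun q : ℝ × M => φ.chartPush c r q.1 q.2) (Icc 0 1 ×ˢ {c}ᶜ) := by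
  set D := φ.symm '' closedBall (φ c) r
  have hD : IsClosed D :=
    ((isCompact_closedBall _ _).image_of_continuousOn (φ.continuousOn_symm.mono hrt)).isClosed
  have hDsource : D ⊆ φ.source := by
    rintro _ ⟨p, hp, rfl⟩
    exact φ.map_target (hrt hp)
  have hchartBallD : φ.chartBall c r ⊆ D := fun m hm =>
    ⟨φ m, ball_subset_closedBall hm.2, φ.left_inv hm.1⟩
  refine continuousOn_of_locally_continuousOn fun q hq => ?_
  by_cases hqD : q.2 ∈ D
  · refine ⟨univ ×ˢ φ.source, isOpen_univ.prod φ.open_source, ⟨trivial, hDsource hqD⟩, ?_⟩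
    have hpush : ContinuousOn (fun q : ℝ × M => radialPush (φ c) r q.1 (φ q.2))
        (Icc 0 1 ×ˢ {c}ᶜ ∩ univ ×ˢ φ.source) := by
      refine (continuousOn_radialPush (φ c) r).comp
        (continuousOn_fst.prodMk (φ.continuousOn.comp continuousOn_snd fun q hq => hq.2.2))
        fun q hq => ?_
      exact fun h => hq.1.2 (φ.injOn hq.2.2 hc h)
    refine (φ.continuousOn_symm.comp hpush fun q hq => ?_).congr fun q hq => if_pos hq.2.2
    exact radialPush_mem_target hrt hq.1.1 hq.2.2
  · refine ⟨univ ×ˢ Dᶜ, isOpen_univ.prod hD.isOpen_compl, ⟨trivial, hqD⟩, ?_⟩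
    exact continuous_snd.continuousOn.congr fun q hq =>
      chartPush_of_notMem_chartBall hq.1.1.1 fun h => hq.2.2 (hchartBallD h)

noncomputable def chartBallComplHomotopyEquiv [T2Space M] [ProperSpace E] (hc : c ∈ φ.source)
    (hr : 0 < r) (hrt : closedBall (φ c) r ⊆ φ.target) :
    ((φ.chartBall c r)ᶜ : Set M) ≃ₕ ({c}ᶜ : Set M) :=
  let F : C(unitInterval × ({c}ᶜ : Set M), ({c}ᶜ : Set M)) :=
    ⟨fun q => ⟨φ.chartPush c r q.1 q.2, chartPush_ne hc hrt q.1.2 q.2.2⟩,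
      ((φ.continuousOn_chartPush hc hrt).comp_continuous
        (f := fun q : unitInterval × ({c}ᶜ : Set M) => ((q.1 : ℝ), (q.2 : M))) (by fun_prop)
        fun q => ⟨q.1.2, q.2.2⟩).subtype_mk _⟩
  .ofDeformationRetraction (compl_subset_compl.mpr (singleton_subset_iff.mpr
      (φ.mem_chartBall_self hc hr))) (f := F.curry 1)
    { toContinuousMap := F
      map_zero_left := fun m => Subtype.ext (chartPush_zero (φ := φ) _)
      map_one_left := fun _ => rfl }
    (fun m => chartPush_one_notMem_chartBall hc hrt m.2)
    (fun m hm => Subtype.ext (chartPush_of_notMem_chartBall zero_le_one hm))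

end OpenPartialHomeomorph

open scoped Manifold

theorem fundamentalGroup_punctured_manifold_iso_complement_general
    {n : ℕ} (M : Type*) [TopologicalSpace M] [T2Space M]
    [ChartedSpace (EuclideanSpace ℝ (Fin n)) M]
    [ConnectedSpace M] :
    ∃ C : Set M, IsOpen C ∧ Nonempty (C ≃ₜ EuclideanSpace ℝ (Fin n)) ∧
      ∃ c : M, ∃ hc : c ∈ C, ∀ z : M, ∀ hz : z ∈ Cᶜ,
        Nonempty
          (FundamentalGroup (({c}ᶜ : Set M)) ⟨z, fun h => (h ▸ hz) hc⟩ ≃*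
            FundamentalGroup (Cᶜ : Set M) ⟨z, hz⟩) := by
  obtain ⟨c⟩ : Nonempty M := inferInstance
  set φ := chartAt (EuclideanSpace ℝ (Fin n)) c
  have hc : c ∈ φ.source := mem_chart_source _ c
  obtain ⟨r, hr, hrt⟩ : ∃ r, 0 < r ∧ closedBall (φ c) r ⊆ φ.target :=
    nhds_basis_closedBall.mem_iff.mp (φ.open_target.mem_nhds (φ.map_source hc))
  refine ⟨φ.chartBall c r, φ.isOpen_chartBall c r,
    φ.nonempty_homeomorph_chartBall hr (ball_subset_closedBall.trans hrt),
    c, φ.mem_chartBall_self hc hr, fun z hz => ?_⟩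
  exact ⟨((φ.chartBallComplHomotopyEquiv hc hr hrt).fundamentalGroupMulEquiv ⟨z, hz⟩).symm⟩

/-- For a compact, connected, closed smooth `n`-manifold `M` (`n ≥ 1`) there are an open cell
`C ≃ₜ ℝⁿ` and a point `c ∈ C` such that for every basepoint `z` in `K = M \ C`, the
fundamental group of `M \ {c}` at `z` is isomorphic to that of `K` at `z`. -/
theorem fundamentalGroup_punctured_manifold_iso_complement
    {n : ℕ} (hn : 1 ≤ n) (M : Type*) [TopologicalSpace M] [T2Space M]
    [ChartedSpace (EuclideanSpace ℝ (Fin n)) M]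
    [IsManifold (𝓡 n) (⊤ : ℕ∞) M] [CompactSpace M] [ConnectedSpace M] :
    ∃ C : Set M, IsOpen C ∧ Nonempty (C ≃ₜ EuclideanSpace ℝ (Fin n)) ∧
      ∃ c : M, ∃ hc : c ∈ C, ∀ z : M, ∀ hz : z ∈ Cᶜ,
        Nonempty
          (FundamentalGroup (({c}ᶜ : Set M)) ⟨z, fun h => (h ▸ hz) hc⟩ ≃*
            FundamentalGroup (Cᶜ : Set M) ⟨z, hz⟩) :=
  fundamentalGroup_punctured_manifold_iso_complement_general M
end
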